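/- For the single-qubit amplitude damping channel D_γ with Kraus operators K₀ = |0⟩⟨0| + √(1−γ)|1⟩⟨1| and K₁ = √γ |0⟩⟨1|, the X-asymmetry measure (1/2)‖Φ^{X∘D_γ} − Φ^{D_γ∘X}‖₂² equals γ²/2, where X is the Pauli-X unitary channel and Φ^M denotes the Choi state of M. -/

import Mathlib

open Matrix Kronecker BigOperators

/-- The swap operator `SWAP = ∑_{i,j} |i⟩⟨j| ⊗ |j⟩⟨i|` on `ℂ^d ⊗ ℂ^d`. -/
noncomputable def swapOp (d : ℕ) : Matrix (Fin d × Fin d) (Fin d × Fin d) ℂ :=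
  ∑ i, ∑ j, (Matrix.single i j (1 : ℂ)) ⊗ₖ (Matrix.single j i (1 : ℂ))

/-- The maximally entangled state `Φ^d = (1/d) ∑_{i,j} |i⟩⟨j| ⊗ |i⟩⟨j|`. -/
noncomputable def maxEnt (d : ℕ) : Matrix (Fin d × Fin d) (Fin d × Fin d) ℂ :=
  (1 / (d : ℂ)) • ∑ i, ∑ j, (Matrix.single i j (1 : ℂ)) ⊗ₖ (Matrix.single i j (1 : ℂ))

/-- The tensor product `N ⊗ M` of two superoperators, applied to a matrix on the
tensor-product space (defined via the expansion in matrix units). -/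
noncomputable def superKron {d : ℕ}
    (N M : Matrix (Fin d) (Fin d) ℂ →ₗ[ℂ] Matrix (Fin d) (Fin d) ℂ)
    (X : Matrix (Fin d × Fin d) (Fin d × Fin d) ℂ) :
    Matrix (Fin d × Fin d) (Fin d × Fin d) ℂ :=
  ∑ a, ∑ b, ∑ c, ∑ e, X (a, c) (b, e) •
    (N (Matrix.single a b 1) ⊗ₖ M (Matrix.single c e 1))

/-- The Choi state `Φ^N = (id ⊗ N)(Φ^d)` of a superoperator `N`. -/
noncomputable def choi {d : ℕ}
    (N : Matrix (Fin d) (Fin d) ℂ →ₗ[ℂ] Matrix (Fin d) (Fin d) ℂ) :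
    Matrix (Fin d × Fin d) (Fin d × Fin d) ℂ :=
  superKron LinearMap.id N (maxEnt d)

/-- The unitary channel `X ↦ U X U†`. -/
noncomputable def uchan {d : ℕ} (U : Matrix (Fin d) (Fin d) ℂ) :
    Matrix (Fin d) (Fin d) ℂ →ₗ[ℂ] Matrix (Fin d) (Fin d) ℂ where
  toFun X := U * X * Uᴴ
  map_add' X Y := by simp [Matrix.mul_add, Matrix.add_mul]
  map_smul' c X := by simp [Matrix.mul_smul, Matrix.smul_mul]

/-- Kraus operator `K₀ = |0⟩⟨0| + √(1−γ)|1⟩⟨1|` of the amplitude damping channel. -/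
noncomputable def K0 (γ : ℝ) : Matrix (Fin 2) (Fin 2) ℂ :=
  !![1, 0; 0, (Real.sqrt (1 - γ) : ℂ)]

/-- Kraus operator `K₁ = √γ |0⟩⟨1|` of the amplitude damping channel. -/
noncomputable def K1 (γ : ℝ) : Matrix (Fin 2) (Fin 2) ℂ :=
  !![0, (Real.sqrt γ : ℂ); 0, 0]

/-- The amplitude damping channel `D_γ(ρ) = K₀ρK₀† + K₁ρK₁†`. -/
noncomputable def ampDamp (γ : ℝ) :
    Matrix (Fin 2) (Fin 2) ℂ →ₗ[ℂ] Matrix (Fin 2) (Fin 2) ℂ where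
  toFun ρ := K0 γ * ρ * (K0 γ)ᴴ + K1 γ * ρ * (K1 γ)ᴴ
  map_add' X Y := by simp [Matrix.mul_add, Matrix.add_mul]; abel
  map_smul' c X := by simp [Matrix.mul_smul, Matrix.smul_mul, smul_add]

/-- The Pauli-X matrix. -/
def pauliX : Matrix (Fin 2) (Fin 2) ℂ := !![0, 1; 1, 0]

/-- The Pauli-Z matrix. -/
def pauliZ : Matrix (Fin 2) (Fin 2) ℂ := !![1, 0; 0, -1]

/-- The Hilbert–Schmidt norm `‖A‖₂ = √Tr[A†A]`. -/
noncomputable def hsNorm {n : Type*} [Fintype n] (A : Matrix n n ℂ) : ℝ :=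
  Real.sqrt ((Aᴴ * A).trace).re

/-!
The two orders of composition differ by a trace-replacing map:
`(X ∘ D_γ - D_γ ∘ X)(ρ) = -γ Tr(ρ) Z`. The Choi state of `ρ ↦ Tr(ρ) B` is `(1/d) 1 ⊗ B`, so the
difference of the Choi states is `(1/2) 1 ⊗ (-γ Z)`, whose squared Hilbert–Schmidt norm is
`(1/4) · 2 · 2γ² = γ²`.
-/

section HilbertSchmidt

variable {m n : Type*} [Fintype m] [Fintype n]

lemma hsNorm_nonneg (A : Matrix n n ℂ) : 0 ≤ hsNorm A := Real.sqrt_nonneg _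

lemma hsNorm_sq (A : Matrix n n ℂ) : hsNorm A ^ 2 = ∑ i, ∑ j, ‖A i j‖ ^ 2 := by
  have hre : ((Aᴴ * A).trace).re = ∑ i, ∑ j, ‖A i j‖ ^ 2 := by
    simp only [Matrix.trace, Matrix.diag_apply, Matrix.mul_apply, Matrix.conjTranspose_apply,
      Complex.re_sum, Complex.star_def, ← Complex.normSq_eq_norm_sq, Complex.normSq_apply]
    rw [Finset.sum_comm]
    simp [Complex.mul_re]
  rw [hsNorm, hre, Real.sq_sqrt (by positivity)]

lemma hsNorm_smul (c : ℂ) (A : Matrix n n ℂ) : hsNorm (c • A) = ‖c‖ * hsNorm A := by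
  refine (pow_left_inj₀ (hsNorm_nonneg _) (by positivity [hsNorm_nonneg A]) two_ne_zero).1 ?_
  rw [mul_pow, hsNorm_sq, hsNorm_sq, Finset.mul_sum]
  simp only [Matrix.smul_apply, smul_eq_mul, norm_mul, mul_pow, Finset.mul_sum]

lemma hsNorm_kronecker (A : Matrix m m ℂ) (B : Matrix n n ℂ) :
    hsNorm (A ⊗ₖ B) = hsNorm A * hsNorm B := by
  refine (pow_left_inj₀ (hsNorm_nonneg _)
    (mul_nonneg (hsNorm_nonneg A) (hsNorm_nonneg B)) two_ne_zero).1 ?_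
  rw [mul_pow, hsNorm_sq, hsNorm_sq, hsNorm_sq, Finset.sum_mul_sum]
  simp only [Fintype.sum_prod_type, Matrix.kroneckerMap_apply, norm_mul, mul_pow,
    Finset.sum_mul_sum]

lemma hsNorm_of_conjTranspose_mul_self_eq_one [DecidableEq n] {U : Matrix n n ℂ}
    (hU : Uᴴ * U = 1) : hsNorm U = √(Fintype.card n) := by
  simp [hsNorm, hU, Matrix.trace_one]

end HilbertSchmidt

section Choi

variable {d : ℕ}

lemma maxEnt_apply (a c b e : Fin d) :
    maxEnt d (a, c) (b, e) = if a = c ∧ b = e then (1 / d : ℂ) else 0 := by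
  simp only [maxEnt, Matrix.smul_apply, Matrix.sum_apply, Matrix.kroneckerMap_apply,
    Matrix.single_apply, ite_and, mul_ite, mul_one, mul_zero]
  simp [Finset.sum_ite_eq, eq_comm]

lemma choi_apply (N : Matrix (Fin d) (Fin d) ℂ →ₗ[ℂ] Matrix (Fin d) (Fin d) ℂ)
    (a c b e : Fin d) :
    choi N (a, c) (b, e) = (1 / d : ℂ) * N (Matrix.single a b 1) c e := by
  simp [choi, superKron, Matrix.sum_apply, Matrix.kroneckerMap_apply, maxEnt_apply,
    Matrix.single_apply, ite_and]

lemma choi_sub (N M : Matrix (Fin d) (Fin d) ℂ →ₗ[ℂ] Matrix (Fin d) (Fin d) ℂ) :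
    choi (N - M) = choi N - choi M := by
  ext ⟨a, c⟩ ⟨b, e⟩
  simp only [choi_apply, Matrix.sub_apply, LinearMap.sub_apply, mul_sub]

lemma choi_eq_of_apply_eq_trace_smul
    (N : Matrix (Fin d) (Fin d) ℂ →ₗ[ℂ] Matrix (Fin d) (Fin d) ℂ)
    (B : Matrix (Fin d) (Fin d) ℂ) (hN : ∀ ρ, N ρ = ρ.trace • B) :
    choi N = (1 / d : ℂ) • (1 ⊗ₖ B) := by
  ext ⟨a, c⟩ ⟨b, e⟩
  by_cases hab : a = b
  · subst hab
    simp [choi_apply, hN, Matrix.trace_single_eq_same]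
  · simp [choi_apply, hN, Matrix.trace_single_eq_of_ne _ _ _ hab, hab]

end Choi

lemma Matrix.conjTranspose_fin_two {α : Type*} [Star α] (a b c d : α) :
    !![a, b; c, d]ᴴ = !![star a, star c; star b, star d] := by
  ext i j
  fin_cases i <;> fin_cases j <;> rfl

lemma uchan_pauliX_apply (ρ : Matrix (Fin 2) (Fin 2) ℂ) :
    uchan pauliX ρ = !![ρ 1 1, ρ 1 0; ρ 0 1, ρ 0 0] := by
  conv_lhs => rw [Matrix.eta_fin_two ρ]
  simp only [uchan, LinearMap.coe_mk, AddHom.coe_mk, pauliX, Matrix.conjTranspose_fin_two,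
    Matrix.mul_fin_two]
  simp

lemma ampDamp_apply {γ : ℝ} (hγ0 : 0 ≤ γ) (hγ1 : γ ≤ 1) (ρ : Matrix (Fin 2) (Fin 2) ℂ) :
    ampDamp γ ρ = !![ρ 0 0 + γ * ρ 1 1, √(1 - γ) * ρ 0 1;
      √(1 - γ) * ρ 1 0, (1 - γ) * ρ 1 1] := by
  have hsq : (√γ : ℂ) ^ 2 = γ := by exact_mod_cast Real.sq_sqrt hγ0
  have hsq' : (√(1 - γ) : ℂ) ^ 2 = 1 - γ := by
    exact_mod_cast Real.sq_sqrt (sub_nonneg.2 hγ1)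
  conv_lhs => rw [Matrix.eta_fin_two ρ]
  simp only [ampDamp, LinearMap.coe_mk, AddHom.coe_mk, K0, K1, Matrix.conjTranspose_fin_two,
    Matrix.mul_fin_two, Matrix.of_add_of, Matrix.cons_add_cons, Matrix.empty_add_empty,
    Complex.star_def, Complex.conj_ofReal, star_zero, star_one]
  ring_nf
  rw [hsq, hsq']
  ring_nf

lemma pauliX_ampDamp_commutator_apply {γ : ℝ} (hγ0 : 0 ≤ γ) (hγ1 : γ ≤ 1)
    (ρ : Matrix (Fin 2) (Fin 2) ℂ) :
    ((uchan pauliX).comp (ampDamp γ) - (ampDamp γ).comp (uchan pauliX)) ρ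
      = ρ.trace • (-(γ : ℂ) • pauliZ) := by
  rw [LinearMap.sub_apply, LinearMap.comp_apply, LinearMap.comp_apply, ampDamp_apply hγ0 hγ1,
    ampDamp_apply hγ0 hγ1, uchan_pauliX_apply, uchan_pauliX_apply]
  ext i j
  fin_cases i <;> fin_cases j <;> simp [pauliZ, Matrix.trace_fin_two] <;> ring

lemma pauliZ_conjTranspose_mul_self : pauliZᴴ * pauliZ = 1 := by
  simp [pauliZ, Matrix.conjTranspose_fin_two, Matrix.one_fin_two]

/-- for the amplitude damping channel `D_γ`, the `X`-asymmetry measure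
`(1/2)‖Φ^{X∘D_γ} − Φ^{D_γ∘X}‖₂²` equals `γ²/2`. -/
theorem ampDamp_X_asymmetry (γ : ℝ) (hγ0 : 0 ≤ γ) (hγ1 : γ ≤ 1) :
    (1 / 2 : ℝ) * (hsNorm (choi ((uchan pauliX).comp (ampDamp γ))
        - choi ((ampDamp γ).comp (uchan pauliX)))) ^ 2
      = γ ^ 2 / 2 := by
  have hchoi : choi ((uchan pauliX).comp (ampDamp γ)) - choi ((ampDamp γ).comp (uchan pauliX))
      = (1 / 2 : ℂ) • (1 ⊗ₖ (-(γ : ℂ) • pauliZ)) := by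
    rw [← choi_sub, choi_eq_of_apply_eq_trace_smul _ _ (pauliX_ampDamp_commutator_apply hγ0 hγ1)]
    norm_num
  rw [hchoi, hsNorm_smul, hsNorm_kronecker, hsNorm_smul,
    hsNorm_of_conjTranspose_mul_self_eq_one (by simp),
    hsNorm_of_conjTranspose_mul_self_eq_one pauliZ_conjTranspose_mul_self]
  simp [mul_pow, abs_of_nonneg hγ0]
  ring
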